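/- arXiv:1011.0620 — 4 statements merged into one kernel-verified Lean document; each statement's English description precedes it below -/
import Mathlib

section
/- Let G be a finite simple graph and let e be an edge of G. Then any cycle of minimum length among all cycles of G containing e is an isometric subgraph of G; that is, for every two vertices x, y on such a shortest cycle C through e, the distance between x and y along C equals their distance in G. -/
/-!
Write the cycle as the edge `ab` followed by a `b`–`a` walk `R`. Minimality of the cycle makes `R`
a shortest `b`–`a` walk avoiding `ab`, so every segment of `R` is at most as long as any walk
between its ends that avoids `ab` (otherwise replace the segment). A walk between two vertices of
the cycle that does use `ab` splits there into two shorter walks between vertices of the cycle,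
and induction on the length finishes the comparison.
-/

open SimpleGraph

namespace SimpleGraph.Walk

variable {V : Type*} {G : SimpleGraph V} {u v x y a b : V}

lemma exists_isSubwalk_of_mem_support {p : G.Walk u v} (hx : x ∈ p.support)
    (hy : y ∈ p.support) :
    (∃ q : G.Walk x y, q.IsSubwalk p) ∨ ∃ q : G.Walk y x, q.IsSubwalk p := by
  induction p with
  | nil =>
    rw [support_nil, List.mem_singleton] at hx hy
    subst hx hy
    exact .inl ⟨nil, isSubwalk_rfl _⟩
  | cons h p ih =>
    have from_start {z} (hz : z ∈ (cons h p).support) :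
        ∃ q : G.Walk _ z, q.IsSubwalk (cons h p) :=
      let ⟨q, _, hqr⟩ := mem_support_iff_exists_append.1 hz
      ⟨q, isSubwalk_of_append_left hqr⟩
    rcases List.mem_cons.1 hx with rfl | hx'
    · exact .inl (from_start hy)
    rcases List.mem_cons.1 hy with rfl | hy'
    · exact .inr (from_start hx)
    exact (ih hx' hy').imp (fun ⟨q, hq⟩ => ⟨q, hq.cons h⟩) fun ⟨q, hq⟩ => ⟨q, hq.cons h⟩

lemma reachable_of_mem_support {p : G.Walk u v} (hx : x ∈ p.support) (hy : y ∈ p.support) :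
    G.Reachable x y :=
  (exists_isSubwalk_of_mem_support hx hy).elim (fun ⟨q, _⟩ => q.reachable)
    fun ⟨q, _⟩ => q.reachable.symm

lemma exists_cons_edges_perm_of_toWalk_isSubwalk {C : G.Walk u u} (hab : G.Adj a b)
    (h : hab.toWalk.IsSubwalk C) :
    ∃ R : G.Walk b a, (R.cons hab).edges.Perm C.edges ∧ C.support ⊆ R.support := by
  obtain ⟨p, q, rfl⟩ := h
  refine ⟨q.append p, ?_, fun z hz => ?_⟩
  · simpa [edges_append] using (List.perm_append_comm.cons _).trans List.perm_middle.symm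
  · simp only [mem_support_append_iff, Adj.toWalk, support_cons, support_nil, List.mem_cons,
      List.not_mem_nil] at hz ⊢
    rcases hz with (hz | rfl | rfl | hz) | hz <;> simp_all

def IsShortestAvoiding (e : Sym2 V) (p : G.Walk u v) : Prop :=
  e ∉ p.edges ∧ ∀ q : G.Walk u v, e ∉ q.edges → p.length ≤ q.length

lemma isShortestAvoiding_of_forall_isCycle (hab : G.Adj a b) {R : G.Walk b a}
    (hR : s(a, b) ∉ R.edges)
    (hmin : ∀ C : G.Walk a a, C.IsCycle → s(a, b) ∈ C.edges → R.length + 1 ≤ C.length) :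
    R.IsShortestAvoiding s(a, b) := by
  classical
  refine ⟨hR, fun Q hQ => ?_⟩
  have hcycle : (Q.bypass.cons hab).IsCycle :=
    (cons_isCycle_iff _ hab).2 ⟨Q.bypass_isPath, fun h => hQ (Q.edges_bypass_subset_edges h)⟩
  have := hmin _ hcycle (by simp)
  have := Q.length_bypass_le_length
  simp only [length_cons] at *
  omega

namespace IsShortestAvoiding

variable {e : Sym2 V} {R : G.Walk u v}

lemma length_le_of_isSubwalk (hR : R.IsShortestAvoiding e) {S : G.Walk x y}
    (hS : S.IsSubwalk R) {P : G.Walk x y} (hP : e ∉ P.edges) : S.length ≤ P.length := by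
  obtain ⟨R₁, R₂, rfl⟩ := hS
  have hRe := hR.1
  have := hR.2 ((R₁.append P).append R₂) (by simp_all [edges_append])
  simp only [length_append] at this
  omega

lemma exists_walk_edges_subset (hR : R.IsShortestAvoiding e) (hx : x ∈ R.support)
    (hy : y ∈ R.support) {P : G.Walk x y} (hP : e ∉ P.edges) :
    ∃ Q : G.Walk x y, Q.edges ⊆ R.edges ∧ Q.length ≤ P.length := by
  rcases exists_isSubwalk_of_mem_support hx hy with ⟨S, hS⟩ | ⟨S, hS⟩
  · exact ⟨S, hS.edges_subset, hR.length_le_of_isSubwalk hS hP⟩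
  · refine ⟨S.reverse, by simpa using hS.edges_subset, ?_⟩
    simpa using hR.length_le_of_isSubwalk hS (P := P.reverse) (by simpa using hP)

lemma exists_walk_edges_subset_cons (hab : G.Adj a b) {R : G.Walk b a}
    (hR : R.IsShortestAvoiding s(a, b)) (hx : x ∈ R.support) (hy : y ∈ R.support)
    (P : G.Walk x y) : ∃ Q : G.Walk x y, Q.edges ⊆ (R.cons hab).edges ∧ Q.length ≤ P.length := by
  induction hn : P.length using Nat.strong_induction_on generalizing x y with
  | _ n ih =>
  by_cases hP : s(a, b) ∈ P.edges
  · obtain ⟨d, hd, hde⟩ := List.mem_map.1 hP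
    obtain ⟨P₁, P₂, rfl⟩ := (isSubwalk_toWalk_adj_iff_mem_darts P).2 hd
    have hend : ∀ z ∈ d.edge, z ∈ R.support := by
      rw [hde]
      simp
    obtain ⟨Q₁, hQ₁, hl₁⟩ :=
      ih P₁.length (by simp [← hn]; omega) hx (hend _ (Sym2.mem_mk_left _ _)) P₁ rfl
    obtain ⟨Q₂, hQ₂, hl₂⟩ :=
      ih P₂.length (by simp [← hn]) (hend _ (Sym2.mem_mk_right _ _)) hy P₂ rfl
    refine ⟨Q₁.append (Q₂.cons d.adj), ?_, ?_⟩
    · rw [edges_append, edges_cons]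
      exact List.append_subset.2 ⟨hQ₁, List.cons_subset.2 ⟨List.mem_cons.2 (.inl hde), hQ₂⟩⟩
    · simp [← hn]
      omega
  · obtain ⟨Q, hQR, hQP⟩ := hR.exists_walk_edges_subset hx hy hP
    exact ⟨Q, fun _ hf => List.mem_cons_of_mem _ (hQR hf), hn ▸ hQP⟩

end IsShortestAvoiding

end SimpleGraph.Walk

theorem shortest_cycle_through_edge_isometric_general {V : Type*}
    (G : SimpleGraph V) (e : Sym2 V) (u : V) (C : G.Walk u u)
    (hC : C.IsCycle) (heC : e ∈ C.edges)
    (hmin : ∀ (w : V) (C' : G.Walk w w), C'.IsCycle → e ∈ C'.edges →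
      C.length ≤ C'.length) :
    ∀ x ∈ C.support, ∀ y ∈ C.support,
      (SimpleGraph.fromEdgeSet {e' | e' ∈ C.edges}).dist x y = G.dist x y := by
  obtain ⟨⟨⟨a, b⟩, hab⟩, hd, rfl⟩ := List.mem_map.1 heC
  obtain ⟨R, hperm, hsupp⟩ :=
    Walk.exists_cons_edges_perm_of_toWalk_isSubwalk hab
      ((Walk.isSubwalk_toWalk_iff_mem_darts C hab).2 hd)
  have hlen : R.length + 1 = C.length := by simpa using hperm.length_eq
  have hR : R.IsShortestAvoiding s(a, b) :=
    Walk.isShortestAvoiding_of_forall_isCycle hab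
      (List.nodup_cons.1 (hperm.nodup_iff.2 hC.edges_nodup)).1
      fun C' hC' he => hlen ▸ hmin a C' hC' he
  set H := fromEdgeSet {e' | e' ∈ C.edges}
  have hHG : H ≤ G := (fromEdgeSet_le G).2 fun f hf => C.edges_subset_edgeSet hf.1
  intro x hx y hy
  obtain ⟨P, hP⟩ := (Walk.reachable_of_mem_support hx hy).exists_walk_length_eq_dist
  obtain ⟨Q, hQR, hQP⟩ := hR.exists_walk_edges_subset_cons hab (hsupp hx) (hsupp hy) P
  have hQH : ∀ f ∈ Q.edges, f ∈ H.edgeSet := fun f hf => by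
    rw [edgeSet_fromEdgeSet]
    exact ⟨hperm.subset (hQR hf), G.not_isDiag_of_mem_edgeSet (Q.edges_subset_edgeSet hf)⟩
  refine le_antisymm ?_ ((Q.transfer H hQH).reachable.dist_anti hHG)
  calc H.dist x y ≤ (Q.transfer H hQH).length := dist_le _
    _ = Q.length := Walk.length_transfer _ _
    _ ≤ G.dist x y := hP ▸ hQP

/-- In a finite simple graph `G`, any shortest cycle `C` among all cycles
containing a given edge `e` is isometric: for every two vertices `x, y` on `C`, the distance
between `x` and `y` along `C` (i.e. in the subgraph formed by the edges of `C`) equals their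
distance in `G`. -/
theorem shortest_cycle_through_edge_isometric {V : Type*} [Fintype V]
    (G : SimpleGraph V) (e : Sym2 V) (u : V) (C : G.Walk u u)
    (hC : C.IsCycle) (heC : e ∈ C.edges)
    (hmin : ∀ (w : V) (C' : G.Walk w w), C'.IsCycle → e ∈ C'.edges →
      C.length ≤ C'.length) :
    ∀ x ∈ C.support, ∀ y ∈ C.support,
      (SimpleGraph.fromEdgeSet {e' | e' ∈ C.edges}).dist x y = G.dist x y :=
  shortest_cycle_through_edge_isometric_general G e u C hC heC hmin
end

section
/- Let G be a finite simple graph, let D be a proper subset of its vertex set, and let P = (x_0, x_1, ..., x_p) be an acceptable D-ear in G. Then for every vertex x on P, the distance from x to D in G equals the distance from x to D measured along P, i.e. d_G(x, D) = d_P(x, D). -/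
/-! Split `P = P₁ ++ P₂` at `x`. Walking along `P₁` backwards or along `P₂` gives
`d_P(x, D) ≤ min |P₁| |P₂|`, and `d_G ≤ d_P` since `P` is a subgraph of `G`. Conversely, let
`W` be a shortest path from `x` to `D` and `u` its last vertex on `P₁` other than `a`.
Following `P` from `a` to `u` and then `W` from `u` is a `D`-ear through the first edge of `P`,
of length at most `|P₁| + |W|`; so if `P` is a shortest such ear, `|P₂| ≤ |W|`. Reversing `P`
treats the last edge and gives `|P₁| ≤ |W|`. -/

open SimpleGraph

variable {V : Type*}

/-- A `D`-ear: a path `P = (x₀, x₁, …, x_p)` in `G` meeting `D` exactly in its two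
endpoints (`P` may be closed, in which case `x₀ = x_p`). -/
def IsDEar (G : SimpleGraph V) (D : Set V) {a b : V} (P : G.Walk a b) : Prop :=
  a ∈ D ∧ b ∈ D ∧ 0 < P.length ∧ P.support.tail.Nodup ∧
    ∀ x ∈ P.support.tail.dropLast, x ∉ D

/-- An acceptable `D`-ear: a `D`-ear that is a shortest `D`-ear among those containing its
first edge, or a shortest `D`-ear among those containing its last edge. -/
def IsAcceptableDEar (G : SimpleGraph V) (D : Set V) {a b : V} (P : G.Walk a b) : Prop :=
  IsDEar G D P ∧
    ((∀ (c d : V) (Q : G.Walk c d), IsDEar G D Q →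
        s(a, P.getVert 1) ∈ Q.edges → P.length ≤ Q.length) ∨
     (∀ (c d : V) (Q : G.Walk c d), IsDEar G D Q →
        s(P.getVert (P.length - 1), b) ∈ Q.edges → P.length ≤ Q.length))

/-- The distance (in `ℕ∞`) from a vertex `x` to a set of vertices `D` in a graph `G`. -/
noncomputable def edistToSet (G : SimpleGraph V) (x : V) (D : Set V) : ℕ∞ :=
  ⨅ y ∈ D, G.edist x y

namespace SimpleGraph.Walk

variable {G : SimpleGraph V}

lemma exists_split_at_last_mem {u v : V} (W : G.Walk u v) {S : Set V}
    (h : ∃ z ∈ W.support, z ∈ S) :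
    ∃ w ∈ S, ∃ (W₀ : G.Walk u w) (W₁ : G.Walk w v),
      W = W₀.append W₁ ∧ ∀ z ∈ W₁.support.tail, z ∉ S := by
  induction W with
  | nil =>
    obtain ⟨z, hz, hzS⟩ := h
    rw [support_nil, List.mem_singleton] at hz
    exact ⟨_, hz ▸ hzS, nil, nil, rfl, by simp⟩
  | @cons u u' v hadj q ih =>
    by_cases hq : ∃ z ∈ q.support, z ∈ S
    · obtain ⟨w, hw, W₀, W₁, rfl, hW₁⟩ := ih hq
      exact ⟨w, hw, cons hadj W₀, W₁, (cons_append _ _ _).symm, hW₁⟩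
    · simp only [not_exists, not_and] at hq
      obtain ⟨z, hz, hzS⟩ := h
      obtain rfl : z = u := by
        rw [support_cons, List.mem_cons] at hz
        exact hz.resolve_right fun hz' => hq z hz' hzS
      exact ⟨z, hzS, nil, cons hadj q, rfl, fun z' hz' => hq z' (by simpa using hz')⟩

lemma exists_split_at_first_mem {u v : V} (W : G.Walk u v) {S : Set V} (hv : v ∈ S) :
    ∃ w ∈ S, ∃ (W₀ : G.Walk u w) (W₁ : G.Walk w v),
      W = W₀.append W₁ ∧ ∀ z ∈ W₀.support.dropLast, z ∉ S := by
  obtain ⟨w, hw, W₀, W₁, hW, hW₁⟩ :=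
    W.reverse.exists_split_at_last_mem ⟨v, W.reverse.start_mem_support, hv⟩
  refine ⟨w, hw, W₁.reverse, W₀.reverse, ?_, ?_⟩
  · rw [← reverse_append, ← hW, reverse_reverse]
  · rw [support_reverse, List.dropLast_reverse]
    exact fun z hz => hW₁ z (List.mem_reverse.1 hz)

end SimpleGraph.Walk

open SimpleGraph.Walk

section Distance

variable {G H : SimpleGraph V} {D : Set V} {x : V}

lemma edistToSet_anti (h : H ≤ G) : edistToSet G x D ≤ edistToSet H x D :=
  iInf₂_mono fun _ _ => edist_anti h

lemma edistToSet_le_length {y : V} (W : G.Walk x y) (hy : y ∈ D) :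
    edistToSet G x D ≤ W.length :=
  (iInf₂_le y hy).trans (edist_le W)

lemma edistToSet_eq_zero (hx : x ∈ D) : edistToSet G x D = 0 :=
  nonpos_iff_eq_zero.1 (edistToSet_le_length (nil : G.Walk x x) hx)

lemma le_edistToSet {n : ℕ}
    (h : ∀ y ∈ D, ∀ W : G.Walk x y, W.IsPath → (∀ z ∈ W.support.dropLast, z ∉ D) →
      n ≤ W.length) :
    (n : ℕ∞) ≤ edistToSet G x D := by
  classical
  refine le_iInf₂ fun y hy => ?_
  by_cases hr : G.Reachable x y
  · obtain ⟨W, hW⟩ := hr.exists_walk_length_eq_edist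
    obtain ⟨z, hz, W₀, W₁, hsplit, hW₀⟩ := W.bypass.exists_split_at_first_mem hy
    have hpath : W₀.IsPath := (hsplit ▸ W.bypass_isPath).of_append_left
    have hlen : W₀.length ≤ W.length := by
      have := congrArg length hsplit
      rw [length_append] at this
      have := W.length_bypass_le_length
      omega
    rw [← hW]
    exact_mod_cast (h z hz W₀ hpath hW₀).trans hlen
  · rw [edist_eq_top_of_not_reachable hr]
    exact le_top

end Distance

section Ears

variable {G : SimpleGraph V} {D : Set V} {a x b : V}

lemma isDEar_append_iff {p : G.Walk a x} {q : G.Walk x b} (hq : ¬q.Nil) :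
    IsDEar G D (p.append q) ↔ a ∈ D ∧ b ∈ D ∧ (p.support.tail ++ q.support.tail).Nodup ∧
      ∀ z ∈ p.support.tail ++ q.support.tail.dropLast, z ∉ D := by
  have hlen : 0 < (p.append q).length := by
    rw [length_append]; exact Nat.lt_add_left _ (not_nil_iff_lt_length.1 hq)
  rw [IsDEar, tail_support_append,
    List.dropLast_append_of_ne_nil (List.ne_nil_of_mem (end_mem_tail_support hq))]
  simp only [hlen, true_and]

lemma isDEar_iff_interior {P : G.Walk a b} :
    IsDEar G D P ↔ a ∈ D ∧ b ∈ D ∧ 0 < P.length ∧ P.support.tail.dropLast.Nodup ∧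
      ∀ z ∈ P.support.tail.dropLast, z ∉ D := by
  refine ⟨fun ⟨ha, hb, hlen, hnd, hoff⟩ =>
      ⟨ha, hb, hlen, hnd.sublist (List.dropLast_sublist _), hoff⟩,
    fun ⟨ha, hb, hlen, hnd, hoff⟩ => ⟨ha, hb, hlen, ?_, hoff⟩⟩
  have hne : P.support.tail ≠ [] :=
    List.ne_nil_of_mem (end_mem_tail_support (not_nil_iff_lt_length.2 hlen))
  have htail : P.support.tail = P.support.tail.dropLast ++ [b] := by
    conv_lhs => rw [← List.dropLast_append_getLast hne, List.getLast_tail, getLast_support]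
  rw [htail, List.nodup_append]
  refine ⟨hnd, List.nodup_singleton b, fun z hz c hc hzc => hoff z hz ?_⟩
  rw [hzc, List.mem_singleton.1 hc]
  exact hb

lemma IsDEar.reverse {P : G.Walk a b} (hP : IsDEar G D P) : IsDEar G D P.reverse := by
  have hint : P.reverse.support.tail.dropLast = P.support.tail.dropLast.reverse := by
    rw [support_reverse, List.tail_reverse, List.dropLast_reverse, List.tail_dropLast]
  obtain ⟨ha, hb, hlen, hnd, hoff⟩ := isDEar_iff_interior.1 hP
  refine isDEar_iff_interior.2 ⟨hb, ha, by rwa [length_reverse], ?_, ?_⟩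
  · rwa [hint, List.nodup_reverse]
  · rw [hint]
    exact fun z hz => hoff z (List.mem_reverse.1 hz)

theorem IsDEar.exists_shortcut {y : V} {P₁ : G.Walk a x} {P₂ : G.Walk x b}
    (hP : IsDEar G D (P₁.append P₂)) (hx : x ∉ D) (hy : y ∈ D) {W : G.Walk x y}
    (hW : W.IsPath) (hWD : ∀ z ∈ W.support.dropLast, z ∉ D) :
    ∃ R : G.Walk a y, IsDEar G D R ∧ s(a, (P₁.append P₂).snd) ∈ R.edges ∧
      R.length ≤ P₁.length + W.length := by
  classical
  have hP₂ : ¬P₂.Nil := fun h => hx (h.eq ▸ hP.2.1)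
  obtain ⟨ha, -, hnd, hoff⟩ := (isDEar_append_iff hP₂).1 hP
  have hP₁ : ¬P₁.Nil := fun h => hx (h.eq ▸ ha)
  obtain ⟨u, hu, W₀, W₁, rfl, hW₁⟩ :=
    W.exists_split_at_last_mem (S := {z | z ∈ P₁.support.tail})
      ⟨x, W.start_mem_support, end_mem_tail_support hP₁⟩
  have huD : u ∉ D := hoff u (List.mem_append_left _ hu)
  have huP : u ∈ P₁.support := List.mem_of_mem_tail hu
  have hW₁ne : ¬W₁.Nil := fun h => huD (h.eq ▸ hy)
  have hsnd : (P₁.takeUntil u huP).snd = (P₁.append P₂).snd := by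
    rw [← takeUntil_append_of_mem_left P₁ P₂ huP]
    exact snd_takeUntil (fun h : u = a => huD (h ▸ ha)) _ _
  have hpref := (P₁.support_takeUntil_prefix_support huP).sublist.tail
  have hplen := P₁.length_takeUntil_le_length huP
  generalize P₁.takeUntil u huP = p at hsnd hpref hplen
  have hpne : ¬p.Nil := fun h => huD (h.eq ▸ ha)
  refine ⟨p.append W₁, (isDEar_append_iff hW₁ne).2 ⟨ha, hy, ?_, ?_⟩, ?_, ?_⟩
  · refine List.nodup_append.2
      ⟨?_, ?_, fun z hz z' hz' hzz' => hW₁ z' hz' (hzz' ▸ hpref.subset hz)⟩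
    · exact (List.nodup_append.1 hnd).1.sublist hpref
    · exact (hW.of_append_right.support_nodup).sublist (List.tail_sublist _)
  · intro z hz
    rcases List.mem_append.1 hz with hz | hz
    · exact hoff z (List.mem_append_left _ (hpref.subset hz))
    · refine hWD z ?_
      rw [support_append, List.dropLast_append_of_ne_nil
        (List.ne_nil_of_mem (end_mem_tail_support hW₁ne))]
      exact List.mem_append_right _ hz
  · rw [edges_append, ← hsnd]
    exact List.mem_append_left _ (mk_start_snd_mem_edges hpne)
  · rw [length_append, length_append]
    omega

theorem IsDEar.length_right_le_edistToSet {P₁ : G.Walk a x} {P₂ : G.Walk x b}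
    (hP : IsDEar G D (P₁.append P₂)) (hx : x ∉ D)
    (hmin : ∀ (c d : V) (R : G.Walk c d), IsDEar G D R → s(a, (P₁.append P₂).snd) ∈ R.edges →
      (P₁.append P₂).length ≤ R.length) :
    (P₂.length : ℕ∞) ≤ edistToSet G x D := by
  refine le_edistToSet fun y hy W hW hWD => ?_
  obtain ⟨R, hR, hedge, hlen⟩ := hP.exists_shortcut hx hy hW hWD
  have := hmin a y R hR hedge
  rw [length_append] at this
  omega

theorem IsDEar.length_left_le_edistToSet {P₁ : G.Walk a x} {P₂ : G.Walk x b}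
    (hP : IsDEar G D (P₁.append P₂)) (hx : x ∉ D)
    (hmin : ∀ (c d : V) (R : G.Walk c d), IsDEar G D R →
      s((P₁.append P₂).penultimate, b) ∈ R.edges → (P₁.append P₂).length ≤ R.length) :
    (P₁.length : ℕ∞) ≤ edistToSet G x D := by
  rw [← length_reverse P₁]
  refine (reverse_append P₁ P₂ ▸ hP.reverse).length_right_le_edistToSet hx
    fun c d R hR he => ?_
  rw [← reverse_append, snd_reverse, Sym2.eq_swap] at he
  rw [← reverse_append, length_reverse]
  exact hmin c d R hR he

lemma edistToSet_fromEdgeSet_le {P₁ : G.Walk a x} {P₂ : G.Walk x b} (ha : a ∈ D)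
    (hb : b ∈ D) :
    edistToSet (fromEdgeSet {e | e ∈ (P₁.append P₂).edges}) x D ≤
      min (P₁.length : ℕ∞) P₂.length := by
  have hsub : ∀ e ∈ (P₁.append P₂).edges,
      e ∈ (fromEdgeSet {e | e ∈ (P₁.append P₂).edges}).edgeSet := fun e he => by
      rw [edgeSet_fromEdgeSet]
      exact ⟨he, G.not_isDiag_of_mem_edgeSet ((P₁.append P₂).edges_subset_edgeSet he)⟩
  rw [edges_append] at hsub
  refine le_min ?_ ?_
  · have hP₁ : ∀ e ∈ P₁.reverse.edges, _ := fun e he =>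
      hsub e (List.mem_append_left _ (by simpa using he))
    simpa using edistToSet_le_length (P₁.reverse.transfer _ hP₁) ha
  · have hP₂ : ∀ e ∈ P₂.edges, _ := fun e he => hsub e (List.mem_append_right _ he)
    simpa using edistToSet_le_length (P₂.transfer _ hP₂) hb

end Ears

theorem acceptable_ear_distance_general {V : Type*}
    (G : SimpleGraph V) (D : Set V)
    {a b : V} (P : G.Walk a b) (hP : IsAcceptableDEar G D P) :
    ∀ x ∈ P.support,
      edistToSet G x D = edistToSet (SimpleGraph.fromEdgeSet {e | e ∈ P.edges}) x D := by
  classical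
  intro x hx
  by_cases hxD : x ∈ D
  · rw [edistToSet_eq_zero hxD, edistToSet_eq_zero hxD]
  obtain ⟨hEar, hmin⟩ := hP
  obtain ⟨P₁, P₂, rfl⟩ := mem_support_iff_exists_append.1 hx
  have hH : fromEdgeSet {e | e ∈ (P₁.append P₂).edges} ≤ G :=
    (fromEdgeSet_le G).2 fun e he => (P₁.append P₂).edges_subset_edgeSet he.1
  refine le_antisymm (edistToSet_anti hH)
    ((edistToSet_fromEdgeSet_le hEar.1 hEar.2.1).trans ?_)
  rcases hmin with hfirst | hlast
  · exact (min_le_right _ _).trans (hEar.length_right_le_edistToSet hxD hfirst)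
  · exact (min_le_left _ _).trans (hEar.length_left_le_edistToSet hxD hlast)

/-- If `P` is an acceptable `D`-ear in a finite graph `G`, for a proper
subset `D` of the vertices, then for every vertex `x` on `P` the distance from `x` to `D`
in `G` equals the distance from `x` to `D` measured along `P`. -/
theorem acceptable_ear_distance {V : Type*} [Fintype V]
    (G : SimpleGraph V) (D : Set V) (hD : D ⊂ Set.univ)
    {a b : V} (P : G.Walk a b) (hP : IsAcceptableDEar G D P) :
    ∀ x ∈ P.support,
      edistToSet G x D = edistToSet (SimpleGraph.fromEdgeSet {e | e ∈ P.edges}) x D :=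
  acceptable_ear_distance_general G D P hP
end

section
/- Let G be a finite bridgeless (2-edge-connected) connected chordal graph (a graph with no induced cycle of length greater than 3) with radius r. Then the rainbow connection number of G satisfies rc(G) ≤ 3r. -/
/-!
In a bridgeless graph every edge `xy` lies on a cycle; closing a shortest `y`–`x` path avoiding
`xy` gives a chordless cycle through `xy`, which chordality forces to be a triangle.

In a connected graph whose every edge lies in a triangle, fix a centre `z` and sort the vertices
by their distance to `z`. Edges inside level `k + 1` get colour `3k + 1`; a vertex `v` of
level `k + 1` gets a tone `t v ∈ {0, 2}`, its edge to a chosen parent gets colour `3k + t v` and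
its other edges down get `3k + 2 - t v`. The triangle on the parent edge of `v` gives either a
second neighbour one level down or a neighbour `y` on the same level; tones are parities of the
distance to a root in the graph of same-level edges, so such a `y` can be chosen with
`t y = 2 - t v`. Hence `v` can descend one level in colour `3k + t v` and also in colours
avoiding it, so any two vertices can descend simultaneously in disjoint colours, and induction on
the level yields rainbow walks with colours below `3 r`.
-/

open SimpleGraph

variable {V : Type*}

/-- An edge colouring `c` makes `G` rainbow connected if every pair of vertices is joined
by a path whose edges all receive distinct colours. -/
def RainbowConnected (G : SimpleGraph V) (c : Sym2 V → ℕ) : Prop :=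
  ∀ u v : V, ∃ p : G.Walk u v, p.IsPath ∧ (p.edges.map c).Nodup

/-- The rainbow connection number of `G`: the least `n` such that some edge colouring with
colours from `{0, …, n-1}` makes `G` rainbow connected. -/
noncomputable def rc (G : SimpleGraph V) : ℕ :=
  sInf {n | ∃ c : Sym2 V → ℕ, (∀ e ∈ G.edgeSet, c e < n) ∧ RainbowConnected G c}

/-- `G` is bridgeless: no edge of `G` is a bridge. -/
def Bridgeless (G : SimpleGraph V) : Prop := ∀ e ∈ G.edgeSet, ¬ G.IsBridge e

/-- A cycle in `G` is isometric if the distance between any two of its vertices measured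
along the cycle equals their distance in `G`. -/
def IsIsometricCycle (G : SimpleGraph V) {v : V} (p : G.Walk v v) : Prop :=
  p.IsCycle ∧ ∀ x ∈ p.support, ∀ y ∈ p.support,
    (SimpleGraph.fromEdgeSet {e | e ∈ p.edges}).dist x y = G.dist x y

/-- `isoNum G`: the size (length) of a largest isometric cycle in `G`. -/
noncomputable def isoNum (G : SimpleGraph V) : ℕ :=
  sSup {n | ∃ (v : V) (p : G.Walk v v), IsIsometricCycle G p ∧ p.length = n}

/-- The radius of `G`: the minimum over vertices `v` of the eccentricity of `v`. -/
noncomputable def radius (G : SimpleGraph V) : ℕ :=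
  (⨅ v : V, ⨆ u : V, G.edist v u).toNat

/-- An induced cycle in `G`: a cycle with no chords, i.e. every edge of `G` between two
vertices of the cycle is an edge of the cycle. -/
def IsInducedCycle (G : SimpleGraph V) {v : V} (p : G.Walk v v) : Prop :=
  p.IsCycle ∧ ∀ x ∈ p.support, ∀ y ∈ p.support, G.Adj x y → s(x, y) ∈ p.edges

/-- The chordality of `G`: the length of a largest induced cycle in `G`. -/
noncomputable def chordality (G : SimpleGraph V) : ℕ :=
  sSup {n | ∃ (v : V) (p : G.Walk v v), IsInducedCycle G p ∧ p.length = n}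

namespace SimpleGraph

variable {G : SimpleGraph V}

lemma Walk.isChordless_of_length_eq_dist {u v : V} {p : G.Walk u v}
    (hp : p.length = G.dist u v) : p.IsChordless := by
  classical
  have mem_edges_of_isSubwalk : ∀ {a b : V} (q : G.Walk a b), q.IsSubwalk p → G.Adj a b →
      s(a, b) ∈ p.edges := by
    intro a b q hq hab
    have hq1 : q.length = 1 :=
      (length_eq_dist_of_subwalk hp hq).trans (dist_eq_one_iff_adj.mpr hab)
    refine hq.edges_subset ?_
    cases q with
    | nil => simp at hq1
    | cons h q' => cases q' with
      | nil => simp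
      | cons => simp at hq1
  refine Walk.isChordless_iff_forall_mem_edges.mpr fun x y hx hy hxy => ?_
  rw [← p.take_spec hx, Walk.mem_support_append_iff] at hy
  rcases hy with hy | hy
  · rw [Sym2.eq_swap]
    exact mem_edges_of_isSubwalk ((p.takeUntil x hx).dropUntil y hy)
      ((Walk.isSubwalk_dropUntil _ _).trans (Walk.isSubwalk_takeUntil _ _)) hxy.symm
  · exact mem_edges_of_isSubwalk ((p.dropUntil x hx).takeUntil y hy)
      ((Walk.isSubwalk_takeUntil _ _).trans (Walk.isSubwalk_dropUntil _ _)) hxy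

lemma Reachable.exists_adj_dist_add_one_eq {u v : V} (h : G.Reachable u v) (hne : u ≠ v) :
    ∃ w, G.Adj v w ∧ G.dist u w + 1 = G.dist u v := by
  obtain ⟨p, hp⟩ := h.symm.exists_walk_length_eq_dist
  cases p with
  | nil => exact absurd rfl hne
  | cons hvw q =>
    refine ⟨_, hvw, ?_⟩
    have hq := dist_le q
    rw [Walk.length_cons, dist_comm] at hp
    rw [dist_comm] at hq
    rcases hvw.diff_dist_adj (u := u) with h' | h' | h' <;> omega

lemma isInducedCycle_cons_of_length_eq_dist {x y : V} (hxy : G.Adj x y)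
    {p : (G.deleteEdges {s(x, y)}).Walk y x}
    (hp : p.length = (G.deleteEdges {s(x, y)}).dist y x) :
    IsInducedCycle G (Walk.cons hxy (p.mapLe (deleteEdges_le _))) := by
  rw [IsInducedCycle, Walk.cons_isCycle_iff, Walk.support_cons, Walk.edges_cons,
    Walk.support_mapLe_eq_support, Walk.edges_mapLe_eq_edges]
  refine ⟨⟨(p.isPath_of_length_eq_dist hp).mapLe _, fun h => ?_⟩, fun a ha b hb hab => ?_⟩
  · simpa using p.edges_subset_edgeSet h
  by_cases he : s(a, b) = s(x, y)
  · rw [he]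
    exact List.mem_cons_self
  have hsupp : ∀ {c}, c ∈ x :: p.support → c ∈ p.support := by
    rintro c (_ | ⟨_, hc⟩)
    exacts [p.end_mem_support, hc]
  exact List.mem_cons_of_mem _ <| (p.isChordless_of_length_eq_dist hp).mem_edges
    (hsupp ha) (hsupp hb) (by simp [hab, he])

lemma exists_adj_adj_of_not_isBridge
    (hchordal : ∀ (v : V) (p : G.Walk v v), IsInducedCycle G p → p.length ≤ 3)
    {x y : V} (hxy : G.Adj x y) (hbridge : ¬ G.IsBridge s(x, y)) :
    ∃ t, G.Adj x t ∧ G.Adj y t := by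
  have hreach : (G.deleteEdges {s(x, y)}).Reachable y x :=
    (not_not.mp (isBridge_iff.not.mp hbridge)).symm
  obtain ⟨p, hp⟩ := hreach.exists_walk_length_eq_dist
  have hlen : p.length = 2 := by
    have h3 := hchordal x _ (isInducedCycle_cons_of_length_eq_dist hxy hp)
    have h2 : 1 < (G.deleteEdges {s(x, y)}).dist y x :=
      hreach.one_lt_dist_of_ne_of_not_adj hxy.ne' (by simp [Sym2.eq_swap])
    simp only [Walk.length_cons, Walk.length_mapLe] at h3
    omega
  have hadj (i : ℕ) (hi : i < 2) : G.Adj (p.getVert i) (p.getVert (i + 1)) :=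
    deleteEdges_le _ (p.adj_getVert_succ (hlen ▸ hi))
  refine ⟨p.getVert 1, ?_, by simpa using hadj 0 (by omega)⟩
  simpa [← hlen] using (hadj 1 (by omega)).symm

noncomputable def rootParity (H : SimpleGraph V) (v : V) : ℕ :=
  H.dist (H.connectedComponentMk v).out v % 2

lemma rootParity_lt_two (H : SimpleGraph V) (v : V) : H.rootParity v < 2 :=
  Nat.mod_lt _ two_pos

lemma exists_adj_rootParity_ne {H : SimpleGraph V} {v w : V} (hvw : H.Adj v w) :
    ∃ y, H.Adj v y ∧ H.rootParity y ≠ H.rootParity v := by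
  set ρ := (H.connectedComponentMk v).out with hρ
  have hroot : ∀ {y}, H.Adj v y → (H.connectedComponentMk y).out = ρ := fun hy => by
    rw [hρ, ConnectedComponent.connectedComponentMk_eq_of_adj hy]
  have hreach : H.Reachable ρ v := ConnectedComponent.exact (Quot.out_eq _)
  by_cases hv : ρ = v
  · refine ⟨w, hvw, ?_⟩
    simp [rootParity, hroot hvw, ← hρ, hv, dist_eq_one_iff_adj.mpr hvw]
  · obtain ⟨y, hy, hdist⟩ := hreach.exists_adj_dist_add_one_eq hv
    refine ⟨y, hy, ?_⟩
    rw [rootParity, rootParity, hroot hy, ← hρ, ← hdist]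
    omega

end SimpleGraph

lemma rainbowConnected_of_forall_exists_walk {G : SimpleGraph V} {c : Sym2 V → ℕ}
    (h : ∀ u v : V, ∃ W : G.Walk u v, (W.edges.map c).Nodup) : RainbowConnected G c := by
  classical
  intro u v
  obtain ⟨W, hW⟩ := h u v
  exact ⟨W.bypass, W.bypass_isPath, hW.sublist (W.edges_bypass_sublist_edges.map c)⟩

lemma rc_le_of_rainbowConnected {G : SimpleGraph V} {c : Sym2 V → ℕ} {n : ℕ}
    (hc : ∀ e ∈ G.edgeSet, c e < n) (h : RainbowConnected G c) : rc G ≤ n :=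
  Nat.sInf_le ⟨c, hc, h⟩

namespace LevelColouring

open scoped Classical

variable (G : SimpleGraph V) (z : V)

def sameLevel : SimpleGraph V where
  Adj x y := G.Adj x y ∧ G.dist z x = G.dist z y
  symm := ⟨fun _ _ h => ⟨h.1.symm, h.2.symm⟩⟩
  loopless := ⟨fun x h => G.loopless.irrefl x h.1⟩

noncomputable def parent (v : V) : V :=
  if h : ∃ a, G.Adj v a ∧ G.dist z a + 1 = G.dist z v then h.choose else v

noncomputable def tone (v : V) : ℕ := 2 * (sameLevel G z).rootParity v

noncomputable def downColour (u v : V) : ℕ :=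
  3 * G.dist z v + if v = parent G z u then tone G z u else 2 - tone G z u

noncomputable def edgeColour (u v : V) : ℕ :=
  if G.dist z u = G.dist z v then 3 * (G.dist z u - 1) + 1
  else if G.dist z v < G.dist z u then downColour G z u v else downColour G z v u

lemma edgeColour_comm (u v : V) : edgeColour G z u v = edgeColour G z v u := by
  unfold edgeColour
  split_ifs <;> first | rfl | omega

noncomputable def colouring : Sym2 V → ℕ := Sym2.lift ⟨edgeColour G z, edgeColour_comm G z⟩

variable {G z}

lemma colouring_of_dist_eq {u v : V} (h : G.dist z u = G.dist z v) :
    colouring G z s(u, v) = 3 * (G.dist z u - 1) + 1 := by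
  simp [colouring, edgeColour, h]

lemma colouring_of_dist_add_one {v a : V} (h : G.dist z a + 1 = G.dist z v) :
    colouring G z s(v, a) =
      3 * G.dist z a + if a = parent G z v then tone G z v else 2 - tone G z v := by
  simp only [colouring, Sym2.lift_mk, edgeColour, if_neg (show G.dist z v ≠ G.dist z a by omega),
    if_pos (show G.dist z a < G.dist z v by omega), downColour]

lemma adj_parent (hG : G.Connected) {v : V} (hv : z ≠ v) :
    G.Adj v (parent G z v) ∧ G.dist z (parent G z v) + 1 = G.dist z v := by
  have h := (hG.preconnected z v).exists_adj_dist_add_one_eq hv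
  rw [parent, dif_pos h]
  exact h.choose_spec

lemma tone_eq_zero_or_two (v : V) : tone G z v = 0 ∨ tone G z v = 2 := by
  have := (sameLevel G z).rootParity_lt_two v
  unfold tone
  omega

lemma exists_sameLevel_adj_tone_eq {v w : V} (h : (sameLevel G z).Adj v w) :
    ∃ y, (sameLevel G z).Adj v y ∧ tone G z y = 2 - tone G z v := by
  obtain ⟨y, hy, hne⟩ := exists_adj_rootParity_ne h
  have := (sameLevel G z).rootParity_lt_two v
  have := (sameLevel G z).rootParity_lt_two y
  exact ⟨y, hy, by unfold tone; omega⟩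

lemma exists_walk_via_parent (hG : G.Connected) {k : ℕ} {v : V} (hv : G.dist z v ≤ k + 1) :
    ∃ (v' : V) (P : G.Walk v v'), G.dist z v' ≤ k ∧
      (P.edges.map (colouring G z)).Sublist [3 * k + tone G z v] := by
  by_cases hvk : G.dist z v ≤ k
  · exact ⟨v, .nil, hvk, by simp⟩
  have hzv : z ≠ v := by rintro rfl; simp at hvk
  obtain ⟨hadj, hd⟩ := adj_parent hG hzv
  refine ⟨_, hadj.toWalk, by omega, ?_⟩
  simp [colouring_of_dist_add_one hd, show G.dist z (parent G z v) = k by omega]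

lemma exists_walk_avoiding_tone (hG : G.Connected)
    (htri : ∀ ⦃x y : V⦄, G.Adj x y → ∃ t, G.Adj x t ∧ G.Adj y t)
    {k : ℕ} {v : V} (hv : G.dist z v ≤ k + 1) :
    ∃ (v' : V) (P : G.Walk v v'), G.dist z v' ≤ k ∧
      (P.edges.map (colouring G z)).Sublist [3 * k + 1, 3 * k + (2 - tone G z v)] := by
  by_cases hvk : G.dist z v ≤ k
  · exact ⟨v, .nil, hvk, by simp⟩
  have hzv : z ≠ v := by rintro rfl; simp at hvk
  obtain ⟨hva, hda⟩ := adj_parent hG hzv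
  obtain ⟨t, hvt, hat⟩ := htri hva
  have ht := hvt.diff_dist_adj (u := z)
  have ht' := hat.diff_dist_adj (u := z)
  by_cases htk : G.dist z t = k
  · refine ⟨t, hvt.toWalk, htk.le, ?_⟩
    have hta : t ≠ parent G z v := hat.ne'
    simp [colouring_of_dist_add_one (show G.dist z t + 1 = G.dist z v by omega), hta, htk]
  · obtain ⟨y, ⟨hvy, hdy⟩, hy⟩ :=
      exists_sameLevel_adj_tone_eq (show (sameLevel G z).Adj v t from ⟨hvt, by omega⟩)
    have hzy : z ≠ y := by rintro rfl; rw [dist_self] at hdy; omega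
    obtain ⟨hyb, hdb⟩ := adj_parent hG hzy
    refine ⟨_, .cons hvy hyb.toWalk, by omega, ?_⟩
    simp [colouring_of_dist_eq hdy, colouring_of_dist_add_one hdb, ← hy,
      show G.dist z (parent G z y) = k by omega, show G.dist z v = k + 1 by omega]

lemma exists_walks_to_lower_level (hG : G.Connected)
    (htri : ∀ ⦃x y : V⦄, G.Adj x y → ∃ t, G.Adj x t ∧ G.Adj y t)
    {k : ℕ} {v w : V} (hv : G.dist z v ≤ k + 1) (hw : G.dist z w ≤ k + 1) :
    ∃ (v' w' : V) (P : G.Walk v v') (Q : G.Walk w w'), G.dist z v' ≤ k ∧ G.dist z w' ≤ k ∧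
      (P.edges.map (colouring G z) ++ Q.edges.map (colouring G z)).Nodup ∧
      ∀ c ∈ P.edges.map (colouring G z) ++ Q.edges.map (colouring G z),
        3 * k ≤ c ∧ c < 3 * k + 3 := by
  have hv_tone := tone_eq_zero_or_two (G := G) (z := z) v
  have hw_tone := tone_eq_zero_or_two (G := G) (z := z) w
  obtain ⟨v', P, hv'k, hP⟩ := exists_walk_via_parent hG hv
  obtain ⟨w', Q, hw'k, L, hQ, hL, hLk⟩ : ∃ (w' : V) (Q : G.Walk w w'), G.dist z w' ≤ k ∧
      ∃ L : List ℕ, (P.edges.map (colouring G z) ++ Q.edges.map (colouring G z)).Sublist L ∧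
        L.Nodup ∧ ∀ c ∈ L, 3 * k ≤ c ∧ c < 3 * k + 3 := by
    by_cases htone : tone G z v = tone G z w
    · obtain ⟨w', Q, hw'k, hQ⟩ := exists_walk_avoiding_tone hG htri (k := k) hw
      refine ⟨w', Q, hw'k, _, hP.append hQ, ?_, ?_⟩ <;> simp <;> omega
    · obtain ⟨w', Q, hw'k, hQ⟩ := exists_walk_via_parent hG (k := k) hw
      refine ⟨w', Q, hw'k, _, hP.append hQ, ?_, ?_⟩ <;> simp <;> omega
  exact ⟨v', w', P, Q, hv'k, hw'k, hL.sublist hQ, fun c hc => hLk c (hQ.subset hc)⟩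

lemma exists_rainbow_walk (hG : G.Connected)
    (htri : ∀ ⦃x y : V⦄, G.Adj x y → ∃ t, G.Adj x t ∧ G.Adj y t) (k : ℕ) :
    ∀ {v w : V}, G.dist z v ≤ k → G.dist z w ≤ k →
      ∃ W : G.Walk v w, (W.edges.map (colouring G z)).Nodup ∧
        ∀ c ∈ W.edges.map (colouring G z), c < 3 * k := by
  induction k with
  | zero =>
    intro v w hv hw
    obtain rfl := hG.dist_eq_zero_iff.mp (Nat.le_zero.mp hv)
    obtain rfl := hG.dist_eq_zero_iff.mp (Nat.le_zero.mp hw)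
    exact ⟨.nil, by simp, by simp⟩
  | succ k ih =>
    intro v w hv hw
    obtain ⟨v', w', P, Q, hv', hw', hPQ, hPQk⟩ := exists_walks_to_lower_level hG htri hv hw
    obtain ⟨M, hM, hMk⟩ := ih hv' hw'
    refine ⟨P.append (M.append Q.reverse), ?_, ?_⟩
    · simp only [Walk.edges_append, Walk.edges_reverse, List.map_append, List.map_reverse,
        List.nodup_append, List.nodup_reverse, List.mem_append, List.mem_reverse] at hPQ hPQk ⊢
      grind
    · simp only [Walk.edges_append, Walk.edges_reverse, List.map_append, List.map_reverse,
        List.mem_append, List.mem_reverse] at hPQk hMk ⊢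
      grind

lemma colouring_lt (hG : G.Connected) {r : ℕ} (hz : ∀ u, G.dist z u ≤ r) {e : Sym2 V}
    (he : e ∈ G.edgeSet) : colouring G z e < 3 * r := by
  induction e using Sym2.ind with
  | h u v =>
    have huv : G.Adj u v := he
    have hu := hz u
    have hv := hz v
    have hnot_both_zero : G.dist z u = 0 → G.dist z v ≠ 0 := fun hu hv => huv.ne <|
      (hG.dist_eq_zero_iff.mp hu).symm.trans (hG.dist_eq_zero_iff.mp hv)
    have tone_le (x : V) : tone G z x ≤ 2 := by
      rcases tone_eq_zero_or_two (G := G) (z := z) x <;> omega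
    rcases huv.diff_dist_adj (u := z) with h | h | h
    · rw [colouring_of_dist_eq h.symm]
      omega
    · rw [Sym2.eq_swap, colouring_of_dist_add_one h.symm]
      split_ifs <;> have := tone_le v <;> omega
    · by_cases hu0 : G.dist z u = 0
      · omega
      rw [colouring_of_dist_add_one (by omega)]
      split_ifs <;> have := tone_le u <;> omega

end LevelColouring

theorem rc_le_three_mul_of_forall_adj_exists_adj_adj {G : SimpleGraph V} (hG : G.Connected)
    (htri : ∀ ⦃x y : V⦄, G.Adj x y → ∃ t, G.Adj x t ∧ G.Adj y t) {z : V} {r : ℕ}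
    (hz : ∀ u, G.dist z u ≤ r) : rc G ≤ 3 * r :=
  rc_le_of_rainbowConnected (fun _ => LevelColouring.colouring_lt hG hz) <|
    rainbowConnected_of_forall_exists_walk fun u v =>
      (LevelColouring.exists_rainbow_walk hG htri r (hz u) (hz v)).imp fun _ h => h.1

lemma SimpleGraph.Connected.exists_forall_dist_le_radius [Finite V] {G : SimpleGraph V}
    (hG : G.Connected) : ∃ z, ∀ u, G.dist z u ≤ _root_.radius G := by
  have := hG.nonempty
  obtain ⟨z, hz⟩ := G.exists_eccent_eq_radius
  have hne : G.eccent z ≠ ⊤ := hz ▸ SimpleGraph.radius_ne_top_iff.mpr hG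
  refine ⟨z, fun u => ?_⟩
  change G.dist z u ≤ G.radius.toNat
  rw [← hz]
  exact ENat.toNat_le_toNat SimpleGraph.edist_le_eccent hne

/-- Every finite bridgeless connected chordal graph (no induced cycle of
length greater than `3`) with radius `r` satisfies `rc G ≤ 3 r`. -/
theorem rc_le_three_radius_of_chordal {V : Type*} [Fintype V]
    (G : SimpleGraph V) (hG : G.Connected) (hbl : Bridgeless G)
    (hchordal : ∀ (v : V) (p : G.Walk v v), IsInducedCycle G p → p.length ≤ 3)
    (r : ℕ) (hr : _root_.radius G = r) :
    rc G ≤ 3 * r := by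
  obtain ⟨z, hz⟩ := hG.exists_forall_dist_le_radius
  refine hr ▸ rc_le_three_mul_of_forall_adj_exists_adj_adj hG (fun x y hxy => ?_) hz
  exact G.exists_adj_adj_of_not_isBridge hchordal hxy (hbl _ hxy)
end

section
/- Let G be a finite bridgeless (2-edge-connected) connected graph with at least one edge and diameter d. Then G contains an isometric cycle, and the size iso(G) of a largest isometric cycle of G satisfies 3 ≤ iso(G) ≤ 2d + 1. -/
open SimpleGraph

variable {V : Type*}

/-!
A shortest cycle `C` is isometric: if two of its vertices `x, y` were closer in `G` than along
`C`, a shortest `x`–`y` path followed by either arc of `C` from `y` back to `x` would be a closed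
walk shorter than `C` that uses some edge of that arc exactly once, and such a closed walk
contains a cycle shorter than `C`. A bridgeless graph with an edge has a cycle, hence a shortest
one, so `iso(G) ≥ 3`. Conversely, positions on an isometric cycle of length `n`, read in `ℤ/n`,
change by `±1` along its edges, so the vertex at position `⌊n/2⌋` is at distance at least `⌊n/2⌋`
from the start along the cycle, hence in `G`, and `⌊n/2⌋ ≤ d`.
-/

namespace SimpleGraph

variable {G : SimpleGraph V}

namespace Walk

lemma exists_eq_append_cons_of_mem_edges {u v : V} (w : G.Walk u v) {e : Sym2 V}
    (he : e ∈ w.edges) :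
    ∃ (c d : V) (h : G.Adj c d) (w₁ : G.Walk u c) (w₂ : G.Walk d v),
      s(c, d) = e ∧ w = w₁.append (cons h w₂) := by
  induction w with
  | nil => simp at he
  | @cons x y z h q ih =>
    by_cases hxy : s(x, y) = e
    · exact ⟨x, y, h, nil, q, hxy, rfl⟩
    · obtain ⟨c, d, hcd, w₁, w₂, rfl, rfl⟩ := ih (by simpa [Ne.symm hxy] using he)
      exact ⟨c, d, hcd, cons h w₁, w₂, rfl, rfl⟩

lemma IsTrail.exists_mem_edges_notMem_of_length_lt {u v u' v' : V} {A : G.Walk u v}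
    (hA : A.IsTrail) (P : G.Walk u' v') (h : P.length < A.length) :
    ∃ e ∈ A.edges, e ∉ P.edges := by
  by_contra! hsub
  have := (hA.edges_nodup.subperm hsub).length_le
  simp only [length_edges] at this
  omega

lemma mem_edgeSet_fromEdgeSet_edges {u v : V} {p : G.Walk u v} {e : Sym2 V}
    (he : e ∈ p.edges) : e ∈ (fromEdgeSet {e | e ∈ p.edges}).edgeSet := by
  simp [he, G.not_isDiag_of_mem_edgeSet (p.edges_subset_edgeSet he)]

end Walk

lemma egirth_le_length_add_one_of_notMem_edges {c d : V} (h : G.Adj c d) (q : G.Walk d c)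
    (hq : s(c, d) ∉ q.edges) : G.egirth ≤ q.length + 1 := by
  classical
  have hcyc : (Walk.cons h q.bypass).IsCycle :=
    Path.cons_isCycle ⟨q.bypass, q.bypass_isPath⟩ h fun he => hq (q.edges_bypass_subset_edges he)
  calc G.egirth ≤ (Walk.cons h q.bypass).length := egirth_le_length hcyc
    _ ≤ q.length + 1 := by simpa using q.length_bypass_le_length

lemma egirth_le_length_of_count_edges_eq_one [DecidableEq V] {u : V} (w : G.Walk u u)
    {e : Sym2 V} (he : w.edges.count e = 1) : G.egirth ≤ w.length := by
  obtain ⟨c, d, h, w₁, w₂, rfl, rfl⟩ :=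
    w.exists_eq_append_cons_of_mem_edges (List.count_pos_iff.mp (by rw [he]; exact Nat.one_pos))
  have hcount : (w₂.append w₁).edges.count s(c, d) = 0 := by
    simp only [Walk.edges_append, Walk.edges_cons, List.count_append, List.count_cons_self] at he ⊢
    omega
  have := egirth_le_length_add_one_of_notMem_edges h _ (List.count_eq_zero.mp hcount)
  simpa [add_comm, add_left_comm] using this

lemma egirth_le_dist_add_length {x y : V} {A : G.Walk y x} (hA : A.IsTrail)
    (h : G.dist x y < A.length) : G.egirth ≤ G.dist x y + A.length := by
  classical
  obtain ⟨P, hP⟩ := A.reverse.reachable.exists_walk_length_eq_dist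
  obtain ⟨e, heA, heP⟩ := hA.exists_mem_edges_notMem_of_length_lt P (hP ▸ h)
  have hcount : (P.append A).edges.count e = 1 := by
    rw [Walk.edges_append, List.count_append, List.count_eq_zero.mpr heP,
      List.count_eq_one_of_mem hA.edges_nodup heA]
  simpa [hP] using egirth_le_length_of_count_edges_eq_one _ hcount

lemma dist_fromEdgeSet_edges_eq_of_egirth_eq {x y : V} {C : G.Walk x x} (hC : C.IsCycle)
    (hg : G.egirth = C.length) (hy : y ∈ C.support) :
    (fromEdgeSet {e | e ∈ C.edges}).dist x y = G.dist x y := by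
  classical
  set H := fromEdgeSet {e | e ∈ C.edges}
  have hHG : H ≤ G := (fromEdgeSet_le G).mpr fun e he => C.edges_subset_edgeSet he.1
  set A₁ := C.takeUntil y hy
  set A₂ := C.dropUntil y hy
  have hlen : A₁.length + A₂.length = C.length := by rw [← Walk.length_append, C.take_spec hy]
  let B₁ : H.Walk x y := A₁.transfer H fun e he =>
    Walk.mem_edgeSet_fromEdgeSet_edges (C.edges_takeUntil_subset_edges hy he)
  let B₂ : H.Walk y x := A₂.transfer H fun e he =>
    Walk.mem_edgeSet_fromEdgeSet_edges (C.edges_dropUntil_subset_edges hy he)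
  have h₁ : H.dist x y ≤ A₁.length := by simpa [B₁] using dist_le B₁
  have h₂ : H.dist x y ≤ A₂.length := by simpa [B₂, dist_comm] using dist_le B₂
  refine le_antisymm (not_lt.mp fun hlt => ?_) (B₁.reachable.dist_anti hHG)
  have hA₂ : A₂.IsTrail := hC.isTrail.dropUntil hy
  have := egirth_le_dist_add_length hA₂ (hlt.trans_le h₂)
  rw [hg] at this
  norm_cast at this
  omega

namespace Walk

lemma exists_natAbs_le_length_and_eq_add_intCast {n : ℕ} {φ : V → ZMod n}
    (hφ : ∀ a b, G.Adj a b → φ b = φ a + 1 ∨ φ b = φ a - 1) {a b : V} (w : G.Walk a b) :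
    ∃ s : ℤ, s.natAbs ≤ w.length ∧ φ b = φ a + s := by
  induction w with
  | nil => exact ⟨0, by simp, by simp⟩
  | @cons x y z h q ih =>
    obtain ⟨s, hs, hφs⟩ := ih
    rcases hφ x y h with hxy | hxy
    · exact ⟨s + 1, by simp only [length_cons]; omega, by rw [hφs, hxy]; push_cast; ring⟩
    · exact ⟨s - 1, by simp only [length_cons]; omega, by rw [hφs, hxy]; push_cast; ring⟩

lemma IsCycle.exists_zmod_index {u : V} {p : G.Walk u u} (hp : p.IsCycle) :
    ∃ φ : V → ZMod p.length, ∀ i ≤ p.length, φ (p.getVert i) = i := by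
  have hinv := hp.getVert_injOn.leftInvOn_invFunOn
  refine ⟨fun z =>
    ((Function.invFunOn p.getVert {i | 1 ≤ i ∧ i ≤ p.length} z : ℕ) : ZMod p.length),
    fun i hi => ?_⟩
  obtain rfl | hi₀ := Nat.eq_zero_or_pos i
  · have hlen : 1 ≤ p.length := by have := hp.three_le_length; omega
    have : p.getVert 0 = p.getVert p.length := by simp
    simp only [this, hinv ⟨hlen, le_rfl⟩, ZMod.natCast_self, Nat.cast_zero]
  · simp only [hinv ⟨hi₀, hi⟩]

end Walk

lemma Reachable.le_dist_of_zmod_potential {n k : ℕ} {φ : V → ZMod n}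
    (hφ : ∀ a b, G.Adj a b → φ b = φ a + 1 ∨ φ b = φ a - 1) (hk : 2 * k ≤ n) {a b : V}
    (hab : G.Reachable a b) (hb : φ b = φ a + k) : k ≤ G.dist a b := by
  by_contra! hlt
  obtain ⟨w, hw⟩ := hab.exists_walk_length_eq_dist
  obtain ⟨s, hs, hφs⟩ := w.exists_natAbs_le_length_and_eq_add_intCast hφ
  have hdvd : (n : ℤ) ∣ k - s := by
    rw [← ZMod.intCast_zmod_eq_zero_iff_dvd]
    push_cast
    rw [hb] at hφs
    linear_combination hφs
  have := Int.le_of_dvd (by omega) hdvd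
  omega

lemma Walk.IsCycle.le_dist_getVert {u : V} {p : G.Walk u u} (hp : p.IsCycle) {k : ℕ}
    (hk : 2 * k ≤ p.length) : k ≤ (fromEdgeSet {e | e ∈ p.edges}).dist u (p.getVert k) := by
  classical
  obtain ⟨φ, hφ⟩ := hp.exists_zmod_index
  have hstep : ∀ a b, (fromEdgeSet {e | e ∈ p.edges}).Adj a b →
      φ b = φ a + 1 ∨ φ b = φ a - 1 := by
    intro a b hab
    obtain ⟨i, hi, hedge⟩ := p.mk_mem_edges_iff_exists.mp ((fromEdgeSet_adj _).mp hab).1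
    rcases Sym2.eq_iff.mp hedge with ⟨rfl, rfl⟩ | ⟨rfl, rfl⟩
    · left; rw [hφ i hi.le, hφ (i + 1) hi]; push_cast; ring
    · right; rw [hφ i hi.le, hφ (i + 1) hi]; push_cast; ring
  let pH := p.transfer _ fun e he => Walk.mem_edgeSet_fromEdgeSet_edges he
  have hreach : (fromEdgeSet {e | e ∈ p.edges}).Reachable u (p.getVert k) :=
    ⟨pH.takeUntil _ (by simp [pH, Walk.getVert_mem_support])⟩
  refine hreach.le_dist_of_zmod_potential hstep hk ?_
  have hφu : φ u = 0 := by simpa using hφ 0 (Nat.zero_le _)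
  rw [hφ k (by omega), hφu, zero_add]

end SimpleGraph

open SimpleGraph

theorem isIsometricCycle_of_egirth_eq {G : SimpleGraph V} {v : V} {C : G.Walk v v}
    (hC : C.IsCycle) (hg : G.egirth = C.length) : IsIsometricCycle G C := by
  classical
  refine ⟨hC, fun x hx y hy => ?_⟩
  have hedges : {e | e ∈ (C.rotate x hx).edges} = {e | e ∈ C.edges} :=
    Set.ext fun e => (C.rotate_edges x hx).mem_iff
  rw [← hedges]
  exact dist_fromEdgeSet_edges_eq_of_egirth_eq (hC.rotate hx) (by rwa [Walk.length_rotate])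
    ((C.mem_support_rotate_iff x hx).mpr hy)

theorem IsIsometricCycle.length_le [Finite V] {G : SimpleGraph V} (hG : G.Connected) {u : V}
    {p : G.Walk u u} (hp : IsIsometricCycle G p) : p.length ≤ 2 * G.diam + 1 := by
  have : Nonempty V := ⟨u⟩
  have hk := hp.1.le_dist_getVert (k := p.length / 2) (by omega)
  rw [hp.2 u p.start_mem_support _ (p.getVert_mem_support _)] at hk
  have := G.dist_le_diam (connected_iff_ediam_ne_top.mp hG) (u := u)
    (v := p.getVert (p.length / 2))
  omega

/-- Every finite bridgeless connected graph `G` with at least one edge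
and diameter `d` contains an isometric cycle, and `3 ≤ isoNum G ≤ 2d + 1`. -/
theorem isoNum_bounds {V : Type*} [Fintype V]
    (G : SimpleGraph V) (hG : G.Connected) (hbl : Bridgeless G)
    (hne : G.edgeSet.Nonempty) (d : ℕ) (hd : G.diam = d) :
    (∃ (v : V) (p : G.Walk v v), IsIsometricCycle G p) ∧
      3 ≤ isoNum G ∧ isoNum G ≤ 2 * d + 1 := by
  obtain ⟨e, he⟩ := hne
  have hcyclic : ¬ G.IsAcyclic := fun hac => hbl e he (isAcyclic_iff_forall_isBridge.mp hac he)
  obtain ⟨v, C, hC, hg⟩ := exists_egirth_eq_length.mpr hcyclic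
  have hiso := isIsometricCycle_of_egirth_eq hC hg
  have hle : ∀ n ∈ {n | ∃ (v : V) (p : G.Walk v v), IsIsometricCycle G p ∧ p.length = n},
      n ≤ 2 * d + 1 := by
    rintro _ ⟨u, p, hp, rfl⟩
    exact hd ▸ hp.length_le hG
  exact ⟨⟨v, C, hiso⟩, hC.three_le_length.trans (le_csSup ⟨_, hle⟩ ⟨v, C, hiso, rfl⟩),
    csSup_le ⟨_, v, C, hiso, rfl⟩ hle⟩
end
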